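/- Let α, β ≥ 0 with α + β ≤ 1, and let ρ_red be the 9×9 matrix (in the ordered basis |00⟩,|01⟩,…,|22⟩ of ℂ³⊗ℂ³) with diagonal entries (1+2α−β)/9 at positions |00⟩,|11⟩,|22⟩ and (2−2α+β)/18 at the remaining six positions, with off-diagonal entries β/6 in the symmetric pairs of positions (|01⟩,|10⟩), (|02⟩,|20⟩), (|12⟩,|21⟩), and all other entries zero (this is any one of the three two-qutrit marginals of the three-qutrit state α|GHZ₃⟩⟨GHZ₃| + β|ψ₃⟩⟨ψ₃| + ((1−α−β)/27)I₂₇, where |GHZ₃⟩ = (1/√3)Σᵢ|iii⟩ and |ψ₃⟩ = (|012⟩+|021⟩+|102⟩+|120⟩+|201⟩+|210⟩)/√6). Then the eigenvalues of ρ_red are (1−α−β)/9, (1+2α−β)/9, and (1−α+2β)/9, each with multiplicity 3, and every eigenvalue is at most 1/3; hence ρ_red ∈ 𝔄𝔉₃. -/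

import Mathlib

open Matrix Kronecker Complex
open scoped ComplexOrder

/-- The canonical maximally entangled vector `|ψ⁺⟩ = (1/√d) ∑ᵢ |ii⟩` on `ℂ^d ⊗ ℂ^d`. -/
noncomputable def psiPlus (d : ℕ) : (Fin d × Fin d) → ℂ :=
  fun p => if p.1 = p.2 then ((Real.sqrt d)⁻¹ : ℝ) else 0

/-- The fully entangled fraction: the supremum over `d × d` unitaries `V` of
`⟨ψ⁺| (I ⊗ V)† ρ (I ⊗ V) |ψ⁺⟩`. -/
noncomputable def fef (d : ℕ) (ρ : Matrix (Fin d × Fin d) (Fin d × Fin d) ℂ) : ℝ :=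
  ⨆ V : Matrix.unitaryGroup (Fin d) ℂ,
    (star (psiPlus d) ⬝ᵥ
      ((((1 : Matrix (Fin d) (Fin d) ℂ) ⊗ₖ (V : Matrix (Fin d) (Fin d) ℂ))ᴴ * ρ *
        ((1 : Matrix (Fin d) (Fin d) ℂ) ⊗ₖ (V : Matrix (Fin d) (Fin d) ℂ))) *ᵥ psiPlus d)).re

/-- A density matrix: positive semidefinite with unit trace. -/
def IsDensityMatrix {n : Type*} [Fintype n] (ρ : Matrix n n ℂ) : Prop :=
  ρ.PosSemidef ∧ ρ.trace = 1

/-- `ρ` has absolute fully entangled fraction: `F(UρU†) ≤ 1/d` for every unitary `U`. -/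
def AbsFEF (d : ℕ) (ρ : Matrix (Fin d × Fin d) (Fin d × Fin d) ℂ) : Prop :=
  ∀ U ∈ Matrix.unitaryGroup (Fin d × Fin d) ℂ, fef d (U * ρ * Uᴴ) ≤ 1 / d

/-- Basis vector `|ij⟩` of `ℂ^d ⊗ ℂ^d`. -/
def ket (d : ℕ) (i j : Fin d) : (Fin d × Fin d) → ℂ :=
  fun p => if p = (i, j) then 1 else 0

/-- Rank-one projector `|v⟩⟨v|`. -/
def proj {n : Type*} (v : n → ℂ) : Matrix n n ℂ :=
  Matrix.vecMulVec v (star v)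

/-- The two-qutrit marginal of the three-qutrit state
`α|GHZ₃⟩⟨GHZ₃| + β|ψ₃⟩⟨ψ₃| + ((1−α−β)/27)I₂₇`. -/
noncomputable def qutritRed (α β : ℝ) : Matrix (Fin 3 × Fin 3) (Fin 3 × Fin 3) ℂ :=
  Matrix.of fun p q =>
    if p = q then
      (if p.1 = p.2 then (((1 + 2*α - β)/9 : ℝ) : ℂ) else (((2 - 2*α + β)/18 : ℝ) : ℂ))
    else if p.1 = q.2 ∧ p.2 = q.1 then ((β/6 : ℝ) : ℂ) else 0

/-!
The vectors `|ii⟩` and `(|ij⟩ ± |ji⟩)/√2` (`i < j`) form an orthonormal eigenbasis of `ρ_red`,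
with eigenvalues `(1+2α−β)/9`, `(1−α+2β)/9` and `(1−α−β)/9` respectively; comparing
characteristic polynomials identifies them with the spectrum of the Hermitian matrix. They are all
at most `1/3`, so `ρ_red ≤ I/3` in the Loewner order. This bound survives conjugation by `U` and by
`I ⊗ V`, and `|φ₃⁺⟩` is a unit vector, so every term of the supremum defining `F(UρU†)` is at
most `1/3`.
-/

open scoped MatrixOrder

namespace Matrix

variable {𝕜 n : Type*} [RCLike 𝕜] [Fintype n] [DecidableEq n]

theorem IsHermitian.eigenvalues_map_eq_of_eq_conj_diagonal {A U : Matrix n n 𝕜}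
    (hA : A.IsHermitian) (hU : U ∈ unitaryGroup n 𝕜) (d : n → ℝ)
    (h : A = U * diagonal (RCLike.ofReal ∘ d) * star U) :
    Finset.univ.val.map hA.eigenvalues = Finset.univ.val.map d := by
  apply Multiset.map_injective (RCLike.ofReal_injective (K := 𝕜))
  have hA' : A.charpoly = ∏ i, (Polynomial.X - Polynomial.C (RCLike.ofReal (d i) : 𝕜)) := by
    rw [h, charpoly_mul_comm, ← mul_assoc, mem_unitaryGroup_iff'.mp hU, one_mul,
      charpoly_diagonal]
    rfl
  rw [Multiset.map_map, Multiset.map_map, ← hA.roots_charpoly_eq_eigenvalues, hA',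
    Polynomial.roots_prod]
  · simp
  · simp [Finset.prod_ne_zero_iff, Polynomial.X_sub_C_ne_zero]

theorem IsHermitian.le_smul_one_of_eigenvalues_le {A : Matrix n n 𝕜} (hA : A.IsHermitian)
    {c : ℝ} (h : ∀ i, hA.eigenvalues i ≤ c) : A ≤ (c : 𝕜) • 1 := by
  set U := (hA.eigenvectorUnitary : Matrix n n 𝕜)
  have hone : (c : 𝕜) • (1 : Matrix n n 𝕜) = U * diagonal (fun _ => (c : 𝕜)) * star U := by
    rw [← smul_one_eq_diagonal, mul_smul_comm, mul_one, smul_mul_assoc,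
      mem_unitaryGroup_iff.mp hA.eigenvectorUnitary.2]
  rw [le_iff, hone, hA.spectral_theorem, Unitary.conjStarAlgAut_apply, ← sub_mul, ← mul_sub,
    diagonal_sub]
  refine PosSemidef.mul_mul_conjTranspose_same (posSemidef_diagonal_iff.mpr fun i => ?_) _
  rw [Function.comp_apply, ← RCLike.ofReal_sub, RCLike.ofReal_nonneg, sub_nonneg]
  exact h i

theorem conjTranspose_mul_mul_le_smul_one {ρ T : Matrix n n 𝕜} {c : 𝕜} (hT : Tᴴ * T = 1)
    (h : ρ ≤ c • 1) : Tᴴ * ρ * T ≤ c • 1 := by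
  calc Tᴴ * ρ * T ≤ Tᴴ * (c • 1) * T := star_left_conjugate_le_conjugate h T
    _ = c • 1 := by rw [mul_smul_comm, mul_one, smul_mul_assoc, hT]

theorem re_dotProduct_mulVec_le_of_le_smul_one {σ : Matrix n n 𝕜} {c : ℝ} (h : σ ≤ (c : 𝕜) • 1)
    {v : n → 𝕜} (hv : star v ⬝ᵥ v = 1) : RCLike.re (star v ⬝ᵥ (σ *ᵥ v)) ≤ c := by
  have := RCLike.nonneg_iff.mp ((le_iff.mp h).dotProduct_mulVec_nonneg v)
  rw [sub_mulVec, dotProduct_sub, smul_mulVec, one_mulVec, dotProduct_smul, hv, smul_eq_mul,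
    mul_one, map_sub, RCLike.ofReal_re] at this
  linarith [this.1]

end Matrix

theorem star_psiPlus_dotProduct_psiPlus (d : ℕ) [NeZero d] :
    star (psiPlus d) ⬝ᵥ psiPlus d = 1 := by
  have hd : (d : ℝ) ≠ 0 := NeZero.ne _
  simp only [dotProduct, psiPlus, Fintype.sum_prod_type, Pi.star_apply, apply_ite star,
    star_zero, mul_ite, ite_mul, mul_zero, zero_mul, Finset.sum_ite_eq,
    Finset.mem_univ, if_true, Finset.sum_const, Finset.card_univ, Fintype.card_fin, nsmul_eq_mul]
  rw [Complex.star_def, Complex.conj_ofReal, ← Complex.ofReal_mul, ← Complex.ofReal_natCast,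
    ← Complex.ofReal_mul, ← mul_inv, Real.mul_self_sqrt (Nat.cast_nonneg d), mul_inv_cancel₀ hd,
    Complex.ofReal_one]

theorem fef_le_of_le_smul_one {d : ℕ} [NeZero d] {ρ : Matrix (Fin d × Fin d) (Fin d × Fin d) ℂ}
    {c : ℝ} (h : ρ ≤ (c : ℂ) • 1) : fef d ρ ≤ c :=
  ciSup_le fun V =>
    re_dotProduct_mulVec_le_of_le_smul_one
      (conjTranspose_mul_mul_le_smul_one (kronecker_mem_unitary (one_mem _) V.2).1 h)
      (star_psiPlus_dotProduct_psiPlus d)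

theorem absFEF_of_le_smul_one {d : ℕ} [NeZero d] {ρ : Matrix (Fin d × Fin d) (Fin d × Fin d) ℂ}
    (h : ρ ≤ ((1 / d : ℝ) : ℂ) • 1) : AbsFEF d ρ := by
  intro U hU
  apply fef_le_of_le_smul_one
  have hU' : Uᴴᴴ * Uᴴ = 1 := by
    rw [conjTranspose_conjTranspose]
    exact mem_unitaryGroup_iff.mp hU
  simpa only [conjTranspose_conjTranspose] using conjTranspose_mul_mul_le_smul_one hU' h

noncomputable def qutritEigenbasis : Matrix (Fin 3 × Fin 3) (Fin 3 × Fin 3) ℂ :=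
  Matrix.of fun p q =>
    if q.1 = q.2 then (if p = q then 1 else 0)
    else if p = q then (((Real.sqrt 2)⁻¹ : ℝ) : ℂ)
    else if p = (q.2, q.1) then
      (if q.1 < q.2 then (((Real.sqrt 2)⁻¹ : ℝ) : ℂ) else -(((Real.sqrt 2)⁻¹ : ℝ) : ℂ))
    else 0

noncomputable def qutritEigenvalue (α β : ℝ) (q : Fin 3 × Fin 3) : ℝ :=
  if q.1 = q.2 then (1 + 2*α - β)/9 else if q.1 < q.2 then (1 - α + 2*β)/9 else (1 - α - β)/9

theorem inv_sqrt_two_mul_self : ((Real.sqrt 2 : ℂ))⁻¹ * ((Real.sqrt 2 : ℂ))⁻¹ = 1/2 := by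
  rw [← mul_inv, ← Complex.ofReal_mul]
  norm_num [Real.mul_self_sqrt]

set_option maxHeartbeats 400000 in
theorem qutritEigenbasis_mem_unitaryGroup : qutritEigenbasis ∈ unitaryGroup (Fin 3 × Fin 3) ℂ := by
  rw [mem_unitaryGroup_iff]
  ext p q
  fin_cases p <;> fin_cases q <;>
    simp [Matrix.mul_apply, Fintype.sum_prod_type, Fin.sum_univ_three, qutritEigenbasis,
      Prod.ext_iff, Complex.conj_ofReal, inv_sqrt_two_mul_self] <;> norm_num

set_option maxHeartbeats 400000 in
theorem qutritRed_eq_conj_diagonal (α β : ℝ) :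
    qutritRed α β = qutritEigenbasis * diagonal (fun q => (qutritEigenvalue α β q : ℂ)) *
      star qutritEigenbasis := by
  ext p q
  rw [Matrix.mul_apply]
  simp only [Matrix.mul_diagonal, Matrix.star_apply]
  fin_cases p <;> fin_cases q <;>
    simp [Fintype.sum_prod_type, Fin.sum_univ_three, qutritEigenbasis, qutritRed, qutritEigenvalue,
        Prod.ext_iff, Complex.conj_ofReal] <;>
    (ring_nf; rw [inv_pow, ← Complex.ofReal_pow]; norm_num [Real.sq_sqrt]; ring)

theorem qutritEigenvalue_le_one_third {α β : ℝ} (hα : 0 ≤ α) (hβ : 0 ≤ β) (hαβ : α + β ≤ 1)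
    (q : Fin 3 × Fin 3) : qutritEigenvalue α β q ≤ 1/3 := by
  unfold qutritEigenvalue
  split_ifs <;> linarith

theorem map_univ_qutritEigenvalue (α β : ℝ) :
    Finset.univ.val.map (qutritEigenvalue α β) =
      {(1 - α - β)/9, (1 - α - β)/9, (1 - α - β)/9,
       (1 + 2*α - β)/9, (1 + 2*α - β)/9, (1 + 2*α - β)/9,
       (1 - α + 2*β)/9, (1 - α + 2*β)/9, (1 - α + 2*β)/9} := by
  rw [show (Finset.univ.val : Multiset (Fin 3 × Fin 3)) =
    {(0,0),(0,1),(0,2),(1,0),(1,1),(1,2),(2,0),(2,1),(2,2)} from by decide]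
  simp only [Multiset.insert_eq_cons, Multiset.map_cons, Multiset.map_singleton,
    qutritEigenvalue, Fin.isValue, Fin.reduceEq, Fin.reduceLT, if_true, if_false]
  refine Multiset.ext.mpr fun a => ?_
  simp only [Multiset.count_cons, Multiset.count_singleton]
  ring

/-- The two-qutrit marginal has eigenvalues `(1−α−β)/9, (1+2α−β)/9, (1−α+2β)/9`, each
with multiplicity 3, all at most `1/3`; hence it lies in `𝔄𝔉₃`. -/
theorem qutritRed_absFEF (α β : ℝ) (hα : 0 ≤ α) (hβ : 0 ≤ β) (hαβ : α + β ≤ 1)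
    (hH : (qutritRed α β).IsHermitian) :
    (Finset.univ.val.map hH.eigenvalues : Multiset ℝ) =
      {(1 - α - β)/9, (1 - α - β)/9, (1 - α - β)/9,
       (1 + 2*α - β)/9, (1 + 2*α - β)/9, (1 + 2*α - β)/9,
       (1 - α + 2*β)/9, (1 - α + 2*β)/9, (1 - α + 2*β)/9} ∧
    (∀ i, hH.eigenvalues i ≤ 1/3) ∧
    AbsFEF 3 (qutritRed α β) := by
  have hspec := hH.eigenvalues_map_eq_of_eq_conj_diagonal qutritEigenbasis_mem_unitaryGroup _
    (qutritRed_eq_conj_diagonal α β)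
  have hle : ∀ i, hH.eigenvalues i ≤ 1/3 := fun i => by
    obtain ⟨q, -, hq⟩ := Multiset.mem_map.mp
      (hspec ▸ Multiset.mem_map_of_mem hH.eigenvalues (Finset.mem_univ_val i))
    exact hq ▸ qutritEigenvalue_le_one_third hα hβ hαβ q
  refine ⟨hspec.trans (map_univ_qutritEigenvalue α β), hle, absFEF_of_le_smul_one ?_⟩
  exact_mod_cast hH.le_smul_one_of_eigenvalues_le hle
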